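/- arXiv:1007.5094 — 2 statements merged into one kernel-verified Lean document; each statement's English description precedes it below -/
import Mathlib

section
/- Synchronization operations on distinct node pairs commute: ∂_{a,b} ∂_{c,d} A = ∂_{c,d} ∂_{a,b} A for a Reo automaton A with a,b,c,d in its alphabet and {a,b} ∩ {c,d} = ∅. -/
/-!
For a conjunction of literals `g`, the condition `g ≰ ¬a ∧ ¬b` is syntactic: `g` is consistent
and does not contain both `¬a` and `¬b`. Deleting the literals over `c, d` keeps `g` consistent
and, when `a, b ∉ {c, d}`, leaves the literals over `a, b` and their firing in `f` untouched.
Hence `∂_{a,b} ∂_{c,d}` keeps exactly the transitions with a consistent guard passing both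
syntactic tests, a condition symmetric in the two pairs, and the deletions commute.
-/

/-- A guard in disjunctive normal form consists of conjunctions of literals;
a single such conjunction (clause) is given by its positive and negative nodes. -/
structure Clause (N : Type) where
  pos : Finset N
  neg : Finset N

/-- Semantics of a conjunction of literals, as the set of satisfying atoms
(truth assignments) of the free Boolean algebra over `N`. -/
def Clause.sem {N : Type} (g : Clause N) : Set (N → Bool) :=
  {v | (∀ x ∈ g.pos, v x = true) ∧ (∀ x ∈ g.neg, v x = false)}

/-- `g∖_{ab}`: delete all occurrences of literals over `a` and `b` from `g`. -/
def Clause.del {N : Type} [DecidableEq N] (g : Clause N) (a b : N) : Clause N :=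
  ⟨(g.pos.erase a).erase b, (g.neg.erase a).erase b⟩

/-- Transition relations of a (normalized) Reo automaton, whose guard labels
are conjunctions of literals. -/
abbrev CTransRel (N Q : Type) := Q → Clause N → Finset N → Q → Prop

/-- The synchronization `∂_{a,b}` of a normalized Reo automaton: keep the
transitions with `g ≰ ¬a∧¬b` and `a ∈ f ⟺ b ∈ f`, deleting `a,b` from the
guard and the firing set. -/
def syncRel {N Q : Type} [DecidableEq N] (δ : CTransRel N Q) (a b : N) :
    CTransRel N Q :=
  fun q g' f' q' => ∃ g f, δ q g f q' ∧
    ¬ (Clause.sem g ⊆ Clause.sem ⟨∅, {a, b}⟩) ∧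
    (a ∈ f ↔ b ∈ f) ∧
    g' = g.del a b ∧ f' = (f.erase a).erase b

lemma Finset.erase_erase_erase_erase_comm {α : Type*} [DecidableEq α] (s : Finset α)
    (a b c d : α) :
    (((s.erase a).erase b).erase c).erase d = (((s.erase c).erase d).erase a).erase b := by
  ext x
  simp only [Finset.mem_erase]
  tauto

namespace Clause

variable {N : Type} [DecidableEq N]

lemma not_sem_subset_iff (g : Clause N) (a b : N) :
    ¬ g.sem ⊆ Clause.sem ⟨∅, {a, b}⟩ ↔ Disjoint g.pos g.neg ∧ ¬ (a ∈ g.neg ∧ b ∈ g.neg) := by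
  constructor
  · intro h
    obtain ⟨v, ⟨hpos, hneg⟩, hv⟩ := Set.not_subset.mp h
    refine ⟨Finset.disjoint_left.mpr fun x hp hn => by simpa [hpos x hp] using hneg x hn, ?_⟩
    rintro ⟨ha, hb⟩
    exact hv ⟨by simp, by simp [hneg a ha, hneg b hb]⟩
  · rintro ⟨hdisj, hab⟩
    refine Set.not_subset.mpr ⟨fun x => !decide (x ∈ g.neg), ⟨?_, ?_⟩, ?_⟩
    · intro x hx
      simp [Finset.disjoint_left.mp hdisj hx]
    · intro x hx
      simp [hx]
    · rintro ⟨-, hv⟩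
      exact hab ⟨by simpa using hv a (by simp), by simpa using hv b (by simp)⟩

lemma disjoint_del {g : Clause N} (h : Disjoint g.pos g.neg) (a b : N) :
    Disjoint (g.del a b).pos (g.del a b).neg :=
  Finset.disjoint_of_subset_left ((Finset.erase_subset _ _).trans (Finset.erase_subset _ _))
    (Finset.disjoint_of_subset_right ((Finset.erase_subset _ _).trans (Finset.erase_subset _ _)) h)

lemma del_comm (g : Clause N) (a b c d : N) : (g.del a b).del c d = (g.del c d).del a b := by
  simp only [Clause.del, Finset.erase_erase_erase_erase_comm]

end Clause

section

variable {N Q : Type} [DecidableEq N]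

lemma syncRel_syncRel_iff {δ : CTransRel N Q} {a b c d : N}
    (hac : a ≠ c) (had : a ≠ d) (hbc : b ≠ c) (hbd : b ≠ d) {q q' : Q} {g' : Clause N}
    {f' : Finset N} :
    syncRel (syncRel δ c d) a b q g' f' q' ↔ ∃ g f, δ q g f q' ∧ Disjoint g.pos g.neg ∧
      ¬ (c ∈ g.neg ∧ d ∈ g.neg) ∧ (c ∈ f ↔ d ∈ f) ∧ ¬ (a ∈ g.neg ∧ b ∈ g.neg) ∧
      (a ∈ f ↔ b ∈ f) ∧ g' = (g.del c d).del a b ∧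
      f' = (((f.erase c).erase d).erase a).erase b := by
  have hneg (g : Clause N) :
      a ∈ (g.del c d).neg ∧ b ∈ (g.del c d).neg ↔ a ∈ g.neg ∧ b ∈ g.neg := by
    simp [Clause.del, hac, had, hbc, hbd]
  have hfire (f : Finset N) :
      (a ∈ (f.erase c).erase d ↔ b ∈ (f.erase c).erase d) ↔ (a ∈ f ↔ b ∈ f) := by
    simp [hac, had, hbc, hbd]
  constructor
  · rintro ⟨-, -, ⟨g, f, hδ, hgcd, hfcd, rfl, rfl⟩, hgab, hfab, rfl, rfl⟩
    rw [Clause.not_sem_subset_iff] at hgcd hgab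
    exact ⟨g, f, hδ, hgcd.1, hgcd.2, hfcd, (hneg g).not.mp hgab.2, (hfire f).mp hfab, rfl, rfl⟩
  · rintro ⟨g, f, hδ, hdisj, hgcd, hfcd, hgab, hfab, rfl, rfl⟩
    refine ⟨g.del c d, (f.erase c).erase d,
      ⟨g, f, hδ, (Clause.not_sem_subset_iff g c d).mpr ⟨hdisj, hgcd⟩, hfcd, rfl, rfl⟩,
      (Clause.not_sem_subset_iff _ a b).mpr ⟨Clause.disjoint_del hdisj c d, (hneg g).not.mpr hgab⟩,
      (hfire f).mpr hfab, rfl, rfl⟩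

end

/-- Synchronization operations on distinct node pairs commute:
`∂_{a,b} ∂_{c,d} A = ∂_{c,d} ∂_{a,b} A` when `{a,b} ∩ {c,d} = ∅`. -/
theorem stmt_11 {N Q : Type} [DecidableEq N] (δ : CTransRel N Q)
    (a b c d : N) (hdisj : ({a, b} : Finset N) ∩ {c, d} = ∅) :
    syncRel (syncRel δ c d) a b = syncRel (syncRel δ a b) c d := by
  rw [← Finset.disjoint_iff_inter_eq_empty] at hdisj
  simp only [Finset.disjoint_insert_right, Finset.disjoint_singleton_right, Finset.mem_insert,
    Finset.mem_singleton, not_or] at hdisj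
  obtain ⟨⟨hca, hcb⟩, hda, hdb⟩ := hdisj
  funext q g' f' q'
  rw [eq_iff_iff, syncRel_syncRel_iff (Ne.symm hca) (Ne.symm hda) (Ne.symm hcb) (Ne.symm hdb),
    syncRel_syncRel_iff hca hcb hda hdb]
  refine exists₂_congr fun g f => ?_
  rw [Clause.del_comm g c d a b, Finset.erase_erase_erase_erase_comm f c d a b]
  tauto
end

section
/- The synchronization operation preserves reactivity: if every transition q --g|f--> q' of A satisfies g ≤ ∧f with g a conjunction of literals, then every transition of ∂_{a,b}A satisfies (g∖_{ab}) ≤ ∧(f∖{a,b}). -/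
/-- The conjunction `∧f` of a finite set `f` of nodes. -/
def conjNodes {N : Type} (f : Finset N) : Set (N → Bool) := {v | ∀ x ∈ f, v x = true}

/-!
A valuation `v` of `g∖_{ab}` need not satisfy `g`, but patching it on `{a, b}` with a model `w`
of `g` does; `g` has a model because `g ≰ ¬a∧¬b`. Reactivity of the original transition makes the
patched valuation true on `f`, and off `{a, b}` it coincides with `v`.
-/

theorem Clause.piecewise_mem_sem {N : Type} [DecidableEq N] {g : Clause N} {a b : N}
    {v w : N → Bool} (hw : w ∈ g.sem) (hv : v ∈ (g.del a b).sem) :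
    ({a, b} : Finset N).piecewise w v ∈ g.sem := by
  have mem_del {s : Finset N} {x : N} (hx : x ∈ s) (hab : x ∉ ({a, b} : Finset N)) :
      x ∈ (s.erase a).erase b := by
    simp only [Finset.mem_insert, Finset.mem_singleton, not_or] at hab
    simp [hab.1, hab.2, hx]
  constructor
  · intro x hx
    by_cases hab : x ∈ ({a, b} : Finset N)
    · rw [Finset.piecewise_eq_of_mem _ _ _ hab]; exact hw.1 x hx
    · rw [Finset.piecewise_eq_of_notMem _ _ _ hab]; exact hv.1 x (mem_del hx hab)
  · intro x hx
    by_cases hab : x ∈ ({a, b} : Finset N)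
    · rw [Finset.piecewise_eq_of_mem _ _ _ hab]; exact hw.2 x hx
    · rw [Finset.piecewise_eq_of_notMem _ _ _ hab]; exact hv.2 x (mem_del hx hab)

theorem Clause.sem_del_subset_conjNodes {N : Type} [DecidableEq N] {g : Clause N}
    {f : Finset N} (a b : N) (hg : g.sem.Nonempty) (hgf : g.sem ⊆ conjNodes f) :
    (g.del a b).sem ⊆ conjNodes ((f.erase a).erase b) := by
  obtain ⟨w, hw⟩ := hg
  intro v hv x hx
  obtain ⟨hxb, hxa, hxf⟩ : x ≠ b ∧ x ≠ a ∧ x ∈ f := by simpa using hx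
  have hx_ab : x ∉ ({a, b} : Finset N) := by simp [hxa, hxb]
  have := hgf (Clause.piecewise_mem_sem hw hv) x hxf
  rwa [Finset.piecewise_eq_of_notMem _ _ _ hx_ab] at this

/-- Synchronization preserves reactivity: if every transition `q --g|f--> q'`
of a normalized automaton satisfies `g ≤ ∧f`, then every transition of
`∂_{a,b}A` satisfies `(g∖_{ab}) ≤ ∧(f∖{a,b})`. -/
theorem stmt_13 {N Q : Type} [DecidableEq N] (δ : CTransRel N Q) (a b : N)
    (hreact : ∀ q g f q', δ q g f q' → Clause.sem g ⊆ conjNodes f) :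
    ∀ q g f q', syncRel δ a b q g f q' → Clause.sem g ⊆ conjNodes f := by
  rintro q _ _ q' ⟨g, f, hδ, hsat, -, rfl, rfl⟩
  have hg : g.sem.Nonempty := (Set.nonempty_of_not_subset hsat).mono Set.sdiff_subset
  exact Clause.sem_del_subset_conjNodes a b hg (hreact q g f q' hδ)
end
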